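/- arXiv:2207.09544 — 6 statements merged into one kernel-verified Lean document; each statement's English description precedes it below -/
import Mathlib

section
/- For every ν ∈ [0,1], every δ > 0, every L ≥ 0 and all reals s, t ≥ 0, one has L·s^ν·t ≤ (2/δ)^{(1−ν)/(1+ν)} · L^{2/(1+ν)} · (s² + t²)/2 + δ/4. -/
/-- Young-type inequality converting a Hölder product `L·s^ν·t` into a quadratic
bound with additive inexactness `δ/4` (core of Lemma 1). -/
theorem young_type_holder_inequality (ν δ L s t : ℝ)
    (hν0 : 0 ≤ ν) (hν1 : ν ≤ 1) (hδ : 0 < δ) (hL : 0 ≤ L) (hs : 0 ≤ s) (ht : 0 ≤ t) :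
    L * s ^ ν * t ≤
      (2 / δ) ^ ((1 - ν) / (1 + ν)) * L ^ (2 / (1 + ν)) * ((s ^ 2 + t ^ 2) / 2) + δ / 4 := by
  have h1ν : (0:ℝ) < 1 + ν := by linarith
  rcases eq_or_lt_of_le hν1 with hν1' | hν1'
  · -- ν = 1
    subst hν1'
    have e1 : ((1:ℝ) - 1) / (1 + 1) = 0 := by norm_num
    have e2 : (2:ℝ) / (1 + 1) = 1 := by norm_num
    rw [e1, e2, Real.rpow_zero, Real.rpow_one, Real.rpow_one, one_mul]
    nlinarith [sq_nonneg (s - t), mul_nonneg hL (sq_nonneg (s - t))]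
  · -- ν < 1
    rcases eq_or_lt_of_le hL with hL0 | hLpos
    · -- L = 0
      subst hL0
      have : (0:ℝ) ^ (2 / (1 + ν)) = 0 :=
        Real.zero_rpow (by positivity)
      rw [this]
      simp only [zero_mul, mul_zero, zero_add]
      positivity
    · set A : ℝ := (2 / δ) ^ ((1 - ν) / (1 + ν)) * L ^ (2 / (1 + ν)) with hA
      have hAp : 0 < A := by
        apply mul_pos <;> exact Real.rpow_pos_of_pos (by positivity) _
      set u : ℝ := s ^ ν with hu
      have hu0 : 0 ≤ u := Real.rpow_nonneg hs _
      -- key identity: L^2 = (A^2)^ν * (A*δ/2)^(1-ν)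
      have hAid : L ^ 2 = (A ^ 2) ^ ν * (A * δ / 2) ^ (1 - ν) := by
        have h2δ : (0:ℝ) < 2 / δ := by positivity
        have hA2 : (A ^ 2) ^ ν = A ^ (2 * ν) := by
          rw [← Real.rpow_natCast A 2, ← Real.rpow_mul hAp.le]
          norm_num
        have hAδ : (A * δ / 2) ^ (1 - ν) = A ^ (1 - ν) * (δ / 2) ^ (1 - ν) := by
          rw [mul_div_assoc, Real.mul_rpow hAp.le (by positivity)]
        rw [hA2, hAδ, ← mul_assoc, ← Real.rpow_add hAp]
        have h2ν : 2 * ν + (1 - ν) = 1 + ν := by ring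
        rw [h2ν, hA]
        rw [Real.mul_rpow (Real.rpow_nonneg h2δ.le _) (Real.rpow_nonneg hLpos.le _),
          ← Real.rpow_mul h2δ.le, ← Real.rpow_mul hLpos.le]
        have e1 : (1 - ν) / (1 + ν) * (1 + ν) = 1 - ν := by
          field_simp
        have e2 : 2 / (1 + ν) * (1 + ν) = 2 := by
          field_simp
        rw [e1, e2]
        have : (2 / δ) ^ (1 - ν) * (δ / 2) ^ (1 - ν) = 1 := by
          rw [← Real.mul_rpow h2δ.le (by positivity)]
          have : 2 / δ * (δ / 2) = 1 := by field_simp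
          rw [this, Real.one_rpow]
        rw [Real.rpow_two]
        linear_combination (-(L ^ 2 : ℝ)) * this
      -- u^2 = (s^2)^ν
      have hu2 : u ^ 2 = (s ^ 2) ^ ν := by
        rw [hu, ← Real.rpow_natCast (s ^ ν) 2, ← Real.rpow_natCast s 2,
          ← Real.rpow_mul hs, ← Real.rpow_mul hs]
        norm_num [mul_comm]
      -- key2 : (L*u)^2 ≤ A^2 * s^2 + A*δ/2
      have key2 : (L * u) ^ 2 ≤ A ^ 2 * s ^ 2 + A * δ / 2 := by
        have hgm := Real.geom_mean_le_arith_mean2_weighted hν0 (by linarith : (0:ℝ) ≤ 1 - ν)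
          (by positivity : (0:ℝ) ≤ A ^ 2 * s ^ 2) (by positivity : (0:ℝ) ≤ A * δ / 2)
          (by ring)
        have heq : (L * u) ^ 2 = (A ^ 2 * s ^ 2) ^ ν * (A * δ / 2) ^ (1 - ν) := by
          rw [mul_pow, hu2, hAid, Real.mul_rpow (by positivity) (by positivity)]
          ring
        rw [heq]
        calc (A ^ 2 * s ^ 2) ^ ν * (A * δ / 2) ^ (1 - ν)
            ≤ ν * (A ^ 2 * s ^ 2) + (1 - ν) * (A * δ / 2) := hgm
          _ ≤ A ^ 2 * s ^ 2 + A * δ / 2 := by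
              nlinarith [sq_nonneg (A * s), mul_pos hAp hδ]
      -- key1 : L*u*t ≤ (L*u)^2/(2*A) + A*t^2/2
      have key1 : L * u * t ≤ (L * u) ^ 2 / (2 * A) + A * t ^ 2 / 2 := by
        rw [div_add_div _ _ (by positivity : (2*A) ≠ 0) (by norm_num : (2:ℝ) ≠ 0),
          le_div_iff₀ (by positivity)]
        nlinarith [sq_nonneg (L * u - A * t)]
      calc L * u * t ≤ (L * u) ^ 2 / (2 * A) + A * t ^ 2 / 2 := key1
        _ ≤ (A ^ 2 * s ^ 2 + A * δ / 2) / (2 * A) + A * t ^ 2 / 2 := by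
            gcongr
        _ = A * ((s ^ 2 + t ^ 2) / 2) + δ / 4 := by
            field_simp
            ring
end

section
/- Let E and F be real inner product spaces, ν ∈ [0,1], Lxx, Lxy, Lyy ≥ 0, μx, μy > 0, and let f : E × F → ℝ be Fréchet-differentiable with partial gradients ∇ₓf, ∇_yf satisfying for all x, x' ∈ E and y, y' ∈ F: ‖∇ₓf(x,y) − ∇ₓf(x',y')‖ ≤ Lxx‖x−x'‖^ν + Lxy‖y−y'‖^ν and ‖∇_yf(x,y) − ∇_yf(x',y')‖ ≤ Lxy‖x−x'‖^ν + Lyy‖y−y'‖^ν. Define G : E × F → E × F by G(x,y) = (∇ₓf(x,y), −∇_yf(x,y)) and W((x,y),(x',y')) := (μx/2)‖x−x'‖² + (μy/2)‖y−y'‖². Then for every δ > 0 and all points u, z, w ∈ E × F: ⟨G(u) − G(z), u − w⟩ ≤ L̃(δ)·(W(u,z) + W(w,u)) + δ, where L̃(δ) = (2/δ)^{(1−ν)/(1+ν)} · ( Lxx^{2/(1+ν)}/μx + Lxy^{2/(1+ν)}/( (min(μx,μy))^{1/(1+ν)} · (max(μx,μy))^{ν/(1+ν)} ) + Lyy^{2/(1+ν)}/μy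 ). -/
open scoped RealInnerProductSpace

private lemma key_scalar (ν L μ1 μ2 δ a c : ℝ) (hν0 : 0 ≤ ν) (hν1 : ν ≤ 1) (hL : 0 ≤ L)
    (hμ1 : 0 < μ1) (hμ2 : 0 < μ2) (hδ : 0 < δ) (ha : 0 ≤ a) (hc : 0 ≤ c) :
    L * a ^ ν * c ≤
      (2 / δ) ^ ((1 - ν) / (1 + ν)) * L ^ (2 / (1 + ν)) /
          (μ1 ^ (ν / (1 + ν)) * μ2 ^ (1 / (1 + ν))) * (μ1 / 2 * a ^ 2 + μ2 / 2 * c ^ 2) +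
        δ / 4 := by
  have h1ν : (0:ℝ) < 1 + ν := by linarith
  have h2δ : (0:ℝ) < 2 / δ := by positivity
  set M : ℝ := (2 / δ) ^ ((1 - ν) / (1 + ν)) * L ^ (2 / (1 + ν)) /
      (μ1 ^ (ν / (1 + ν)) * μ2 ^ (1 / (1 + ν))) with hMdef
  have hM0 : 0 ≤ M := by positivity
  rcases eq_or_lt_of_le hL with h0 | hLpos
  · have hz : L * a ^ ν * c = 0 := by rw [← h0]; ring
    rw [hz]
    have : 0 ≤ M * (μ1 / 2 * a ^ 2 + μ2 / 2 * c ^ 2) := by positivity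
    linarith
  · have hMpos : 0 < M := by positivity
    have e1 : ((a ^ 2 : ℝ)) ^ (ν / 2) = a ^ ν := by
      rw [← Real.rpow_natCast a 2, ← Real.rpow_mul ha]
      congr 1; ring
    have e2 : ((c ^ 2 : ℝ)) ^ ((1:ℝ) / 2) = c := by
      rw [← Real.rpow_natCast c 2, ← Real.rpow_mul hc]
      norm_num
    have e4 : M ^ ((1 + ν) / 2) =
        (2 / δ) ^ ((1 - ν) / 2) * L / (μ1 ^ (ν / 2) * μ2 ^ ((1:ℝ) / 2)) := by
      rw [hMdef, Real.div_rpow (by positivity) (by positivity),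
        Real.mul_rpow (by positivity) (by positivity),
        Real.mul_rpow (by positivity) (by positivity),
        ← Real.rpow_mul h2δ.le, ← Real.rpow_mul hLpos.le,
        ← Real.rpow_mul hμ1.le, ← Real.rpow_mul hμ2.le]
      have q1 : (1 - ν) / (1 + ν) * ((1 + ν) / 2) = (1 - ν) / 2 := by field_simp
      have q2 : 2 / (1 + ν) * ((1 + ν) / 2) = 1 := by field_simp
      have q3 : ν / (1 + ν) * ((1 + ν) / 2) = ν / 2 := by field_simp
      have q4 : 1 / (1 + ν) * ((1 + ν) / 2) = 1 / 2 := by field_simp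
      rw [q1, q2, q3, q4, Real.rpow_one]
    have e5 : (2 / δ) ^ ((1 - ν) / 2) * (δ / 2) ^ ((1 - ν) / 2) = 1 := by
      rw [← Real.mul_rpow h2δ.le (by positivity)]
      rw [show (2 / δ) * (δ / 2) = 1 by field_simp]
      exact Real.one_rpow _
    have hid : L * a ^ ν * c =
        (M * (μ1 * a ^ 2)) ^ (ν / 2) * (M * (μ2 * c ^ 2)) ^ ((1:ℝ) / 2) *
          (δ / 2) ^ ((1 - ν) / 2) := by
      rw [Real.mul_rpow (by positivity) (by positivity),
        Real.mul_rpow (by positivity) (by positivity),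
        Real.mul_rpow (by positivity) (by positivity),
        Real.mul_rpow (by positivity) (by positivity), e1, e2]
      have e3 : M ^ (ν / 2) * M ^ ((1:ℝ) / 2) = M ^ ((1 + ν) / 2) := by
        rw [← Real.rpow_add hMpos]; ring_nf
      have hμ1p : (0:ℝ) < μ1 ^ (ν / 2) := by positivity
      have hμ2p : (0:ℝ) < μ2 ^ ((1:ℝ) / 2) := by positivity
      have key : M ^ (ν / 2) * (μ1 ^ (ν / 2) * a ^ ν) * (M ^ ((1:ℝ)/2) * (μ2 ^ ((1:ℝ)/2) * c)) *
          (δ / 2) ^ ((1 - ν) / 2)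
          = (M ^ ((1 + ν) / 2) * (μ1 ^ (ν / 2) * μ2 ^ ((1:ℝ)/2))) *
            ((2 / δ) ^ ((1 - ν) / 2))⁻¹ *
            ((2 / δ) ^ ((1 - ν) / 2) * (δ / 2) ^ ((1 - ν) / 2)) * (a ^ ν * c) := by
        rw [← e3]; field_simp
      rw [key, e5, e4]
      have h2δp : (0:ℝ) < (2 / δ) ^ ((1 - ν) / 2) := by positivity
      field_simp
    rw [hid]
    have hAM := Real.geom_mean_le_arith_mean3_weighted
      (by linarith : (0:ℝ) ≤ ν / 2) (by norm_num : (0:ℝ) ≤ (1:ℝ)/2)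
      (by linarith : (0:ℝ) ≤ (1 - ν) / 2)
      (by positivity : (0:ℝ) ≤ M * (μ1 * a ^ 2)) (by positivity : (0:ℝ) ≤ M * (μ2 * c ^ 2))
      (by positivity : (0:ℝ) ≤ δ / 2) (by ring : ν / 2 + 1/2 + (1 - ν) / 2 = 1)
    have hX : 0 ≤ M * (μ1 * a ^ 2) := by positivity
    nlinarith [mul_nonneg (sub_nonneg.2 hν1) hX, mul_nonneg hν0 hδ.le]

private lemma minmax_le (ν μ1 μ2 : ℝ) (hν0 : 0 ≤ ν) (hν1 : ν ≤ 1)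
    (hμ1 : 0 < μ1) (hμ2 : 0 < μ2) :
    (min μ1 μ2) ^ (1 / (1 + ν)) * (max μ1 μ2) ^ (ν / (1 + ν)) ≤
      μ1 ^ (ν / (1 + ν)) * μ2 ^ (1 / (1 + ν)) := by
  have h1ν : (0:ℝ) < 1 + ν := by linarith
  have hsub : (0:ℝ) ≤ 1 / (1 + ν) - ν / (1 + ν) := by
    rw [div_sub_div_same]
    apply div_nonneg <;> linarith
  rcases le_total μ1 μ2 with h | h
  · rw [min_eq_left h, max_eq_right h]
    have h12 : μ1 ^ (1 / (1 + ν) - ν / (1 + ν)) ≤ μ2 ^ (1 / (1 + ν) - ν / (1 + ν)) :=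
      Real.rpow_le_rpow hμ1.le h hsub
    calc μ1 ^ (1 / (1 + ν)) * μ2 ^ (ν / (1 + ν))
        = μ1 ^ (ν / (1 + ν)) * μ1 ^ (1 / (1 + ν) - ν / (1 + ν)) * μ2 ^ (ν / (1 + ν)) := by
          rw [← Real.rpow_add hμ1]; ring_nf
      _ ≤ μ1 ^ (ν / (1 + ν)) * μ2 ^ (1 / (1 + ν) - ν / (1 + ν)) * μ2 ^ (ν / (1 + ν)) := by
          have := mul_le_mul_of_nonneg_left h12 (Real.rpow_nonneg hμ1.le (ν / (1 + ν)))
          exact mul_le_mul_of_nonneg_right this (Real.rpow_nonneg hμ2.le _)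
      _ = μ1 ^ (ν / (1 + ν)) * μ2 ^ (1 / (1 + ν)) := by
          rw [mul_assoc, ← Real.rpow_add hμ2]; ring_nf
  · rw [min_eq_right h, max_eq_left h]
    exact le_of_eq (mul_comm _ _)

/-- Generalized relative smoothness (Lemma 1) for the gradient part of the
saddle-point operator: a Hölder-continuous gradient yields, for every `δ > 0`,
an inexact relative smoothness inequality with constant `L̃(δ)`. -/
theorem holder_gradient_inexact_relative_smoothness
    {E F : Type*} [NormedAddCommGroup E] [InnerProductSpace ℝ E] [CompleteSpace E]
    [NormedAddCommGroup F] [InnerProductSpace ℝ F] [CompleteSpace F]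
    (ν Lxx Lxy Lyy μx μy : ℝ) (hν0 : 0 ≤ ν) (hν1 : ν ≤ 1)
    (hLxx : 0 ≤ Lxx) (hLxy : 0 ≤ Lxy) (hLyy : 0 ≤ Lyy) (hμx : 0 < μx) (hμy : 0 < μy)
    (f : E × F → ℝ) (hf : Differentiable ℝ f)
    (gx : E × F → E) (gy : E × F → F)
    (hgx : ∀ p : E × F, HasGradientAt (fun x => f (x, p.2)) (gx p) p.1)
    (hgy : ∀ p : E × F, HasGradientAt (fun y => f (p.1, y)) (gy p) p.2)
    (hHx : ∀ (x x' : E) (y y' : F),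
      ‖gx (x, y) - gx (x', y')‖ ≤ Lxx * ‖x - x'‖ ^ ν + Lxy * ‖y - y'‖ ^ ν)
    (hHy : ∀ (x x' : E) (y y' : F),
      ‖gy (x, y) - gy (x', y')‖ ≤ Lxy * ‖x - x'‖ ^ ν + Lyy * ‖y - y'‖ ^ ν)
    (G : E × F → E × F) (hG : ∀ p, G p = (gx p, -gy p))
    (W : E × F → E × F → ℝ)
    (hW : ∀ p q, W p q = μx / 2 * ‖p.1 - q.1‖ ^ 2 + μy / 2 * ‖p.2 - q.2‖ ^ 2) :
    ∀ δ > (0 : ℝ), ∀ u z w : E × F,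
      ⟪(G u).1 - (G z).1, u.1 - w.1⟫ + ⟪(G u).2 - (G z).2, u.2 - w.2⟫ ≤
        (2 / δ) ^ ((1 - ν) / (1 + ν)) *
            (Lxx ^ (2 / (1 + ν)) / μx +
              Lxy ^ (2 / (1 + ν)) /
                ((min μx μy) ^ (1 / (1 + ν)) * (max μx μy) ^ (ν / (1 + ν))) +
              Lyy ^ (2 / (1 + ν)) / μy) * (W u z + W w u) + δ := by
  intro δ hδ u z w
  have h1ν : (0:ℝ) < 1 + ν := by linarith
  set a := ‖u.1 - z.1‖ with hadef
  set b := ‖u.2 - z.2‖ with hbdef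
  set c := ‖u.1 - w.1‖ with hcdef
  set d := ‖u.2 - w.2‖ with hddef
  have ha : 0 ≤ a := norm_nonneg _
  have hb : 0 ≤ b := norm_nonneg _
  have hc : 0 ≤ c := norm_nonneg _
  have hd : 0 ≤ d := norm_nonneg _
  set C : ℝ := (2 / δ) ^ ((1 - ν) / (1 + ν)) with hCdef
  have hC : 0 ≤ C := Real.rpow_nonneg (by positivity) _
  set mm : ℝ := (min μx μy) ^ (1 / (1 + ν)) * (max μx μy) ^ (ν / (1 + ν)) with hmmdef
  have hmmpos : 0 < mm := by
    have h1 : 0 < min μx μy := lt_min hμx hμy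
    have h2 : 0 < max μx μy := lt_of_lt_of_le hμx (le_max_left _ _)
    positivity
  -- inner product bounds
  have hIP1 : ⟪(G u).1 - (G z).1, u.1 - w.1⟫ ≤ (Lxx * a ^ ν + Lxy * b ^ ν) * c := by
    have h1 := real_inner_le_norm ((G u).1 - (G z).1) (u.1 - w.1)
    have h2 : ‖(G u).1 - (G z).1‖ ≤ Lxx * a ^ ν + Lxy * b ^ ν := by
      rw [hG u, hG z]
      exact hHx u.1 z.1 u.2 z.2
    calc ⟪(G u).1 - (G z).1, u.1 - w.1⟫ ≤ ‖(G u).1 - (G z).1‖ * ‖u.1 - w.1‖ := h1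
      _ ≤ (Lxx * a ^ ν + Lxy * b ^ ν) * c := mul_le_mul_of_nonneg_right h2 (norm_nonneg _)
  have hIP2 : ⟪(G u).2 - (G z).2, u.2 - w.2⟫ ≤ (Lxy * a ^ ν + Lyy * b ^ ν) * d := by
    have h1 := real_inner_le_norm ((G u).2 - (G z).2) (u.2 - w.2)
    have h2 : ‖(G u).2 - (G z).2‖ ≤ Lxy * a ^ ν + Lyy * b ^ ν := by
      have hneg : (G u).2 - (G z).2 = -(gy u - gy z) := by
        rw [hG u, hG z]; show -gy u - -gy z = -(gy u - gy z); abel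
      rw [hneg, norm_neg]
      exact hHy u.1 z.1 u.2 z.2
    calc ⟪(G u).2 - (G z).2, u.2 - w.2⟫ ≤ ‖(G u).2 - (G z).2‖ * ‖u.2 - w.2‖ := h1
      _ ≤ (Lxy * a ^ ν + Lyy * b ^ ν) * d := mul_le_mul_of_nonneg_right h2 (norm_nonneg _)
  -- identities for same-variable denominators
  have exp1 : ν / (1 + ν) + 1 / (1 + ν) = 1 := by field_simp; ring
  have dxx : μx ^ (ν / (1 + ν)) * μx ^ (1 / (1 + ν)) = μx := by
    rw [← Real.rpow_add hμx, exp1, Real.rpow_one]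
  have dyy : μy ^ (ν / (1 + ν)) * μy ^ (1 / (1 + ν)) = μy := by
    rw [← Real.rpow_add hμy, exp1, Real.rpow_one]
  -- four scalar bounds
  have k1 := key_scalar ν Lxx μx μx δ a c hν0 hν1 hLxx hμx hμx hδ ha hc
  rw [dxx] at k1
  have k2 := key_scalar ν Lyy μy μy δ b d hν0 hν1 hLyy hμy hμy hδ hb hd
  rw [dyy] at k2
  have k3 := key_scalar ν Lxy μy μx δ b c hν0 hν1 hLxy hμy hμx hδ hb hc
  have k4 := key_scalar ν Lxy μx μy δ a d hν0 hν1 hLxy hμx hμy hδ ha hd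
  -- upgrade the cross terms using the min/max denominator
  have hmm3 : mm ≤ μy ^ (ν / (1 + ν)) * μx ^ (1 / (1 + ν)) := by
    have := minmax_le ν μy μx hν0 hν1 hμy hμx
    rwa [min_comm μy μx, max_comm μy μx] at this
  have hmm4 : mm ≤ μx ^ (ν / (1 + ν)) * μy ^ (1 / (1 + ν)) :=
    minmax_le ν μx μy hν0 hν1 hμx hμy
  have hLq : 0 ≤ Lxy ^ (2 / (1 + ν)) := Real.rpow_nonneg hLxy _
  have hM3 : C * Lxy ^ (2 / (1 + ν)) / (μy ^ (ν / (1 + ν)) * μx ^ (1 / (1 + ν))) ≤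
      C * (Lxy ^ (2 / (1 + ν)) / mm) := by
    rw [mul_div_assoc]
    exact mul_le_mul_of_nonneg_left (div_le_div_of_nonneg_left hLq hmmpos hmm3) hC
  have hM4 : C * Lxy ^ (2 / (1 + ν)) / (μx ^ (ν / (1 + ν)) * μy ^ (1 / (1 + ν))) ≤
      C * (Lxy ^ (2 / (1 + ν)) / mm) := by
    rw [mul_div_assoc]
    exact mul_le_mul_of_nonneg_left (div_le_div_of_nonneg_left hLq hmmpos hmm4) hC
  have k3' : Lxy * b ^ ν * c ≤
      C * (Lxy ^ (2 / (1 + ν)) / mm) * (μy / 2 * b ^ 2 + μx / 2 * c ^ 2) + δ / 4 := by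
    have hP : (0:ℝ) ≤ μy / 2 * b ^ 2 + μx / 2 * c ^ 2 := by positivity
    have := mul_le_mul_of_nonneg_right hM3 hP
    exact le_trans k3 (by linarith)
  have k4' : Lxy * a ^ ν * d ≤
      C * (Lxy ^ (2 / (1 + ν)) / mm) * (μx / 2 * a ^ 2 + μy / 2 * d ^ 2) + δ / 4 := by
    have hP : (0:ℝ) ≤ μx / 2 * a ^ 2 + μy / 2 * d ^ 2 := by positivity
    have := mul_le_mul_of_nonneg_right hM4 hP
    exact le_trans k4 (by linarith)
  -- put things together
  rw [hW u z, hW w u]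
  have hc1 : ‖w.1 - u.1‖ = c := by rw [hcdef]; exact norm_sub_rev _ _
  have hd1 : ‖w.2 - u.2‖ = d := by rw [hddef]; exact norm_sub_rev _ _
  rw [hc1, hd1]
  have h1 : 0 ≤ C * (Lxx ^ (2 / (1 + ν)) / μx) * (μy / 2 * b ^ 2 + μy / 2 * d ^ 2) := by
    positivity
  have h2 : 0 ≤ C * (Lyy ^ (2 / (1 + ν)) / μy) * (μx / 2 * a ^ 2 + μx / 2 * c ^ 2) := by
    positivity
  rw [← hCdef, mul_div_assoc] at k1
  rw [← hCdef, mul_div_assoc] at k2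
  set K1 := Lxx ^ (2 / (1 + ν)) / μx with hK1def
  set K2 := Lxy ^ (2 / (1 + ν)) / mm with hK2def
  set K3 := Lyy ^ (2 / (1 + ν)) / μy with hK3def
  have hstep : (Lxx * a ^ ν + Lxy * b ^ ν) * c + (Lxy * a ^ ν + Lyy * b ^ ν) * d ≤
      C * (K1 + K2 + K3) *
        ((μx / 2 * a ^ 2 + μy / 2 * b ^ 2) + (μx / 2 * c ^ 2 + μy / 2 * d ^ 2)) + δ := by
    linarith [k1, k2, k3', k4', h1, h2]
  calc ⟪(G u).1 - (G z).1, u.1 - w.1⟫ + ⟪(G u).2 - (G z).2, u.2 - w.2⟫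
      ≤ (Lxx * a ^ ν + Lxy * b ^ ν) * c + (Lxy * a ^ ν + Lyy * b ^ ν) * d :=
        add_le_add hIP1 hIP2
    _ ≤ _ := by
        refine le_trans hstep (le_of_eq ?_)
        ring
end

section
/- Let E be a real inner product space, X ⊆ E a nonempty convex set, and d : E → ℝ a convex Fréchet-differentiable function with Bregman divergence V(y,x) := d(y) − d(x) − ⟨∇d(x), y − x⟩. Let p ∈ E, z₀, w ∈ E, t ≥ 0, and suppose z⁺ ∈ X minimizes the function z ↦ ⟨p, z⟩ + V(z, z₀) + t·V(z, w) over X. Then for every u ∈ X: ⟨p, z⁺ − u⟩ ≤ V(u, z₀) − V(u, z⁺) − V(z⁺, z₀) + t·( V(u, w) − V(u, z⁺) − V(z⁺, w) ). -/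
/-!
The objective `z ↦ ⟪p, z⟫ + V z z₀ + t * V z w` has gradient `p + (∇d z - ∇d z₀) + t (∇d z - ∇d w)`,
so minimality of `zp` over the convex set `X` gives the first-order condition
`0 ≤ ⟪p + (∇d zp - ∇d z₀) + t (∇d zp - ∇d w), u - zp⟫`. The three-point identity
`V u x - V u y - V y x = ⟪∇d y - ∇d x, u - y⟫` turns this into the claim.
-/

open scoped RealInnerProductSpace

open InnerProductSpace

theorem HasFDerivAt.apply_sub_nonneg_of_isMinOn {E : Type*} [NormedAddCommGroup E]
    [NormedSpace ℝ E] {f : E → ℝ} {f' : StrongDual ℝ E} {s : Set E} {x u : E}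
    (hf : HasFDerivAt f f' x) (h : IsMinOn f s x) (hs : Convex ℝ s) (hx : x ∈ s) (hu : u ∈ s) :
    0 ≤ f' (u - x) :=
  h.localize.hasFDerivWithinAt_nonneg hf.hasFDerivWithinAt
    (sub_mem_posTangentConeAt_of_segment_subset (hs.segment_subset hx hu))

section Bregman

variable {E : Type*} [NormedAddCommGroup E] [InnerProductSpace ℝ E]

noncomputable def bregmanDiv (d : E → ℝ) (Dd : E → E) (y x : E) : ℝ :=
  d y - d x - ⟪Dd x, y - x⟫

theorem bregmanDiv_three_point (d : E → ℝ) (Dd : E → E) (u x y : E) :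
    bregmanDiv d Dd u x - bregmanDiv d Dd u y - bregmanDiv d Dd y x = ⟪Dd y - Dd x, u - y⟫ := by
  simp only [bregmanDiv, inner_sub_left, inner_sub_right]
  ring

theorem hasGradientAt_bregmanDiv_left [CompleteSpace E] {d : E → ℝ} {Dd : E → E} {g x y : E}
    (hd : HasGradientAt d g y) :
    HasGradientAt (fun z => bregmanDiv d Dd z x) (g - Dd x) y := by
  rw [hasGradientAt_iff_hasFDerivAt, map_sub]
  exact (hd.hasFDerivAt.sub_const (d x)).sub
    ((hasFDerivAt_comp_sub x).2 (innerSL ℝ (Dd x)).hasFDerivAt)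

end Bregman

theorem bregman_three_point_inequality_general
    {E : Type*} [NormedAddCommGroup E] [InnerProductSpace ℝ E] [CompleteSpace E]
    (X : Set E) (hXconv : Convex ℝ X)
    (d : E → ℝ)
    (Dd : E → E) (hd : ∀ x, HasGradientAt d (Dd x) x)
    (V : E → E → ℝ) (hV : ∀ y x, V y x = d y - d x - ⟪Dd x, y - x⟫)
    (p z₀ w : E) (t : ℝ)
    (zp : E) (hzpX : zp ∈ X)
    (hmin : ∀ z ∈ X, ⟪p, zp⟫ + V zp z₀ + t * V zp w ≤ ⟪p, z⟫ + V z z₀ + t * V z w) :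
    ∀ u ∈ X,
      ⟪p, zp - u⟫ ≤ V u z₀ - V u zp - V zp z₀ + t * (V u w - V u zp - V zp w) := by
  intro u hu
  obtain rfl : V = bregmanDiv d Dd := by funext y x; exact hV y x
  have hobj : HasFDerivAt (fun z => ⟪p, z⟫ + bregmanDiv d Dd z z₀ + t * bregmanDiv d Dd z w)
      (innerSL ℝ p + toDual ℝ E (Dd zp - Dd z₀) + t • toDual ℝ E (Dd zp - Dd w)) zp :=
    ((innerSL ℝ p).hasFDerivAt.add (hasGradientAt_bregmanDiv_left (hd zp))).add
      ((hasGradientAt_bregmanDiv_left (hd zp)).hasFDerivAt.const_mul t)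
  have hfirst := hobj.apply_sub_nonneg_of_isMinOn hmin hXconv hzpX hu
  simp only [add_apply, smul_apply, toDual_apply_apply, innerSL_apply_apply, smul_eq_mul] at hfirst
  rw [bregmanDiv_three_point, bregmanDiv_three_point, ← neg_sub u zp, inner_neg_right]
  linarith

/-- Composite three-point inequality for the prox step (optimality property of
`w_k` and `z_{k+1}` in Algorithms 3, 4, 5). -/
theorem bregman_three_point_inequality
    {E : Type*} [NormedAddCommGroup E] [InnerProductSpace ℝ E] [CompleteSpace E]
    (X : Set E) (hXne : X.Nonempty) (hXconv : Convex ℝ X)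
    (d : E → ℝ) (hdconv : ConvexOn ℝ Set.univ d)
    (Dd : E → E) (hd : ∀ x, HasGradientAt d (Dd x) x)
    (V : E → E → ℝ) (hV : ∀ y x, V y x = d y - d x - ⟪Dd x, y - x⟫)
    (p z₀ w : E) (t : ℝ) (ht : 0 ≤ t)
    (zp : E) (hzpX : zp ∈ X)
    (hmin : ∀ z ∈ X, ⟪p, zp⟫ + V zp z₀ + t * V zp w ≤ ⟪p, z⟫ + V z z₀ + t * V z w) :
    ∀ u ∈ X,
      ⟪p, zp - u⟫ ≤ V u z₀ - V u zp - V zp z₀ + t * (V u w - V u zp - V zp w) :=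
  bregman_three_point_inequality_general X hXconv d Dd hd V hV p z₀ w t zp hzpX hmin
end

section
/- Let E be a real inner product space, X ⊆ E a nonempty convex set, d : E → ℝ a convex Fréchet-differentiable function with Bregman divergence V(y,x) := d(y) − d(x) − ⟨∇d(x), y − x⟩, μ ≥ 0, and g : E → E a μ-relatively strongly monotone operator on X. If x* ∈ X is a solution of the Minty variational inequality for g on X, then for every z ∈ X: ⟨g(z), z − x*⟩ ≥ μ·( V(z, x*) + V(x*, z) ); in particular ⟨g(z), z − x*⟩ ≥ μ·V(x*, z). -/
/-!
Testing the Minty inequality at `p = x* + t (z - x*)`, `0 < t < 1`, gives `⟪g p, z - x*⟫ ≥ 0`;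
with relative strong monotonicity at `(p, z)`, where `V z p + V p z = ⟪∇d z - ∇d p, z - p⟫`,
this yields `μ ⟪∇d z - ∇d p, z - x*⟫ ≤ ⟪g z, z - x*⟫`. Letting `t → 0⁺` only needs
`t ↦ ⟪∇d p, z - x*⟫` to be right-continuous, and it is: it is the derivative of the convex
function `t ↦ d p`, and slopes of a convex function squeeze its derivative.
-/

open scoped RealInnerProductSpace

open Set Filter Topology

namespace ConvexOn

variable {φ φ' : ℝ → ℝ}

theorem continuousWithinAt_Ioi_of_hasDerivAt (hφ : ConvexOn ℝ univ φ)
    (hφ' : ∀ t, HasDerivAt φ (φ' t) t) (a : ℝ) : ContinuousWithinAt φ' (Ioi a) a := by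
  have hslope : Tendsto (slope φ a) (𝓝[>] a) (𝓝 (φ' a)) :=
    (hasDerivAt_iff_tendsto_slope.mp (hφ' a)).mono_left (nhdsWithin_mono _ fun _ h ↦ ne_of_gt h)
  have hreflect : Tendsto (fun t ↦ 2 * t - a) (𝓝[>] a) (𝓝[>] a) := by
    refine tendsto_nhdsWithin_of_tendsto_nhds_of_eventually_within _ ?_ ?_
    · have : Continuous fun t : ℝ ↦ 2 * t - a := by fun_prop
      exact (this.tendsto' a a (by ring)).mono_left nhdsWithin_le_nhds
    · filter_upwards [self_mem_nhdsWithin] with t (ht : a < t)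
      show a < 2 * t - a
      linarith
  have hupper : Tendsto (fun t ↦ 2 * slope φ a (2 * t - a) - slope φ a t) (𝓝[>] a)
      (𝓝 (φ' a)) := by
    simpa [two_mul] using ((hslope.comp hreflect).const_mul 2).sub hslope
  refine tendsto_of_tendsto_of_tendsto_of_le_of_le' hslope hupper ?_ ?_
  · filter_upwards [self_mem_nhdsWithin] with t (ht : a < t)
    exact hφ.slope_le_of_hasDerivAt trivial trivial ht (hφ' t)
  · filter_upwards [self_mem_nhdsWithin] with t (ht : a < t)
    -- `φ' t` is bounded by the secant over `[t, 2t - a]`, a combination of secants from `a`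
    have hsecant : slope φ t (2 * t - a) = 2 * slope φ a (2 * t - a) - slope φ a t := by
      simp only [slope_def_field, show 2 * t - a - t = t - a by ring,
        show 2 * t - a - a = 2 * (t - a) by ring]
      field_simp [(sub_pos.2 ht).ne']
      ring
    exact hsecant ▸ hφ.le_slope_of_hasDerivAt trivial trivial (by linarith) (hφ' t)

end ConvexOn

section

variable {E : Type*} [NormedAddCommGroup E] [InnerProductSpace ℝ E]

theorem bregman_add_swap {d : E → ℝ} {Dd : E → E} {V : E → E → ℝ}
    (hV : ∀ y x, V y x = d y - d x - ⟪Dd x, y - x⟫) (y x : E) :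
    V y x + V x y = ⟪Dd y - Dd x, y - x⟫ := by
  rw [hV, hV, inner_sub_left, ← neg_sub y x, inner_neg_right]
  ring

theorem ConvexOn.comp_add_smul {d : E → ℝ} (hd : ConvexOn ℝ univ d) (x v : E) :
    ConvexOn ℝ univ fun t : ℝ ↦ d (x + t • v) := by
  have h := hd.comp_affineMap (AffineMap.lineMap x (x + v) : ℝ →ᵃ[ℝ] E)
  have hline : (fun t : ℝ ↦ d (x + t • v)) = d ∘ AffineMap.lineMap x (x + v) := by
    ext t
    simp [AffineMap.lineMap_apply, add_comm]
  rwa [hline, ← preimage_univ]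

def IsMintySolution (g : E → E) (X : Set E) (xs : E) : Prop :=
  ∀ x ∈ X, ⟪g x, xs - x⟫ ≤ 0

namespace IsMintySolution

variable {g G : E → E} {X : Set E} {μ : ℝ} {xs z : E}

theorem mul_inner_le_of_mem_Ioo (hMinty : IsMintySolution g X xs) (hX : Convex ℝ X)
    (hxs : xs ∈ X) (hz : z ∈ X)
    (hmono : ∀ x ∈ X, ∀ y ∈ X, μ * ⟪G y - G x, y - x⟫ ≤ ⟪g y - g x, y - x⟫)
    {t : ℝ} (ht : t ∈ Ioo 0 1) :
    μ * ⟪G z - G (xs + t • (z - xs)), z - xs⟫ ≤ ⟪g z, z - xs⟫ := by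
  set c := z - xs
  set p := xs + t • c
  have hp : p ∈ X := hX.add_smul_sub_mem hxs hz ⟨ht.1.le, ht.2.le⟩
  have hgp : 0 ≤ ⟪g p, c⟫ := by
    have h := hMinty p hp
    rw [show xs - p = -(t • c) by simp [p], inner_neg_right, real_inner_smul_right] at h
    nlinarith [ht.1]
  have hmono_p := hmono p hp z hz
  rw [show z - p = (1 - t) • c by simp only [p, c]; module, real_inner_smul_right,
    real_inner_smul_right, inner_sub_left (g z)] at hmono_p
  have h1t : 0 < 1 - t := sub_pos.2 ht.2
  refine le_of_mul_le_mul_left ?_ h1t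
  nlinarith

theorem mul_inner_le (hMinty : IsMintySolution g X xs) (hX : Convex ℝ X)
    (hxs : xs ∈ X) (hz : z ∈ X)
    (hmono : ∀ x ∈ X, ∀ y ∈ X, μ * ⟪G y - G x, y - x⟫ ≤ ⟪g y - g x, y - x⟫)
    (hG : ContinuousWithinAt (fun t : ℝ ↦ ⟪G (xs + t • (z - xs)), z - xs⟫) (Ioi 0) 0) :
    μ * ⟪G z - G xs, z - xs⟫ ≤ ⟪g z, z - xs⟫ := by
  have hlim : Tendsto (fun t : ℝ ↦ μ * ⟪G z - G (xs + t • (z - xs)), z - xs⟫) (𝓝[>] 0)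
      (𝓝 (μ * ⟪G z - G xs, z - xs⟫)) := by
    simp_rw [inner_sub_left]
    simpa using (tendsto_const_nhds.sub hG).const_mul μ
  refine le_of_tendsto hlim ?_
  filter_upwards [Ioo_mem_nhdsGT one_pos] with t ht
  exact hMinty.mul_inner_le_of_mem_Ioo hX hxs hz hmono ht

end IsMintySolution

variable [CompleteSpace E]

theorem HasGradientAt.hasDerivAt_comp_add_smul {d : E → ℝ} {d' x v : E} {t : ℝ}
    (hd : HasGradientAt d d' (x + t • v)) :
    HasDerivAt (fun s : ℝ ↦ d (x + s • v)) ⟪d', v⟫ t := by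
  have hline : HasDerivAt (fun s : ℝ ↦ x + s • v) v t := by
    simpa using ((hasDerivAt_id t).smul_const v).const_add x
  have := hd.hasFDerivAt.comp_hasDerivAt t hline
  simp only [InnerProductSpace.toDual_apply_apply] at this
  exact this

namespace ConvexOn

variable {d : E → ℝ}

theorem add_inner_sub_le_of_hasGradientAt (hd : ConvexOn ℝ univ d) {d' x : E}
    (hx : HasGradientAt d d' x) (y : E) : d x + ⟪d', y - x⟫ ≤ d y := by
  have hderiv := HasGradientAt.hasDerivAt_comp_add_smul (v := y - x) (t := 0) (by simpa using hx)
  have := (hd.comp_add_smul x (y - x)).le_slope_of_hasDerivAt trivial trivial one_pos hderiv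
  simp only [slope_def_field, zero_smul, add_zero, one_smul, add_sub_cancel, sub_zero,
    div_one] at this
  linarith

theorem continuousWithinAt_Ioi_inner_gradient (hd : ConvexOn ℝ univ d) {Dd : E → E}
    (hDd : ∀ x, HasGradientAt d (Dd x) x) (x v : E) (a : ℝ) :
    ContinuousWithinAt (fun t : ℝ ↦ ⟪Dd (x + t • v), v⟫) (Ioi a) a :=
  (hd.comp_add_smul x v).continuousWithinAt_Ioi_of_hasDerivAt
    (fun _ ↦ (hDd _).hasDerivAt_comp_add_smul) a

end ConvexOn

end

theorem minty_solution_is_strong_solution_general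
    {E : Type*} [NormedAddCommGroup E] [InnerProductSpace ℝ E] [CompleteSpace E]
    (X : Set E) (hXconv : Convex ℝ X)
    (d : E → ℝ) (hdconv : ConvexOn ℝ Set.univ d)
    (Dd : E → E) (hd : ∀ x, HasGradientAt d (Dd x) x)
    (V : E → E → ℝ) (hV : ∀ y x, V y x = d y - d x - ⟪Dd x, y - x⟫)
    (μ : ℝ) (hμ : 0 ≤ μ) (g : E → E)
    (hmono : ∀ x ∈ X, ∀ y ∈ X, μ * (V y x + V x y) ≤ ⟪g y - g x, y - x⟫)
    (xs : E) (hxs : xs ∈ X) (hMinty : ∀ x ∈ X, ⟪g x, xs - x⟫ ≤ 0) :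
    ∀ z ∈ X, μ * (V z xs + V xs z) ≤ ⟪g z, z - xs⟫ ∧ μ * V xs z ≤ ⟪g z, z - xs⟫ := by
  intro z hz
  simp only [bregman_add_swap hV] at hmono ⊢
  have hstrong : μ * ⟪Dd z - Dd xs, z - xs⟫ ≤ ⟪g z, z - xs⟫ :=
    IsMintySolution.mul_inner_le hMinty hXconv hxs hz hmono
      (hdconv.continuousWithinAt_Ioi_inner_gradient hd xs (z - xs) 0)
  have hVz : 0 ≤ V z xs := by
    rw [hV]
    linarith [hdconv.add_inner_sub_le_of_hasGradientAt (hd xs) z]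
  refine ⟨hstrong, le_trans ?_ hstrong⟩
  rw [← bregman_add_swap hV]
  exact mul_le_mul_of_nonneg_left (le_add_of_nonneg_left hVz) hμ

/-- Weak (Minty) solutions are strong solutions for μ-relatively strongly
monotone operators. -/
theorem minty_solution_is_strong_solution
    {E : Type*} [NormedAddCommGroup E] [InnerProductSpace ℝ E] [CompleteSpace E]
    (X : Set E) (hXne : X.Nonempty) (hXconv : Convex ℝ X)
    (d : E → ℝ) (hdconv : ConvexOn ℝ Set.univ d)
    (Dd : E → E) (hd : ∀ x, HasGradientAt d (Dd x) x)
    (V : E → E → ℝ) (hV : ∀ y x, V y x = d y - d x - ⟪Dd x, y - x⟫)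
    (μ : ℝ) (hμ : 0 ≤ μ) (g : E → E)
    (hmono : ∀ x ∈ X, ∀ y ∈ X, μ * (V y x + V x y) ≤ ⟪g y - g x, y - x⟫)
    (xs : E) (hxs : xs ∈ X) (hMinty : ∀ x ∈ X, ⟪g x, xs - x⟫ ≤ 0) :
    ∀ z ∈ X, μ * (V z xs + V xs z) ≤ ⟪g z, z - xs⟫ ∧ μ * V xs z ≤ ⟪g z, z - xs⟫ :=
  minty_solution_is_strong_solution_general X hXconv d hdconv Dd hd V hV μ hμ g hmono xs hxs hMinty
end

section
/- Let E be a real inner product space, X ⊆ E a nonempty convex set, d : E → ℝ a convex Fréchet-differentiable function with Bregman divergence V(y,x) := d(y) − d(x) − ⟨∇d(x), y − x⟩, and g : E → E a monotone operator on X (⟨g(x) − g(y), x − y⟩ ≥ 0 for all x, y ∈ X). Let x* ∈ X solve the Minty variational inequality (⟨g(x), x* − x⟩ ≤ 0 for all x ∈ X), let δ ≥ 0, and let (z_k)_{k≥0}, (w_k)_{k≥0} in X and positive reals (L_k)_{k≥1} satisfy the per-iteration Mirror Prox inequality −⟨g(w_k), x* − w_k⟩ ≤ L_{k+1}·( V(x*,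 z_k) − V(x*, z_{k+1}) ) + δ for every k ≥ 0. Then for every N ≥ 1: V(x*, z_N) ≤ V(x*, z_0) + δ·S_N, where S_N := Σ_{k=0}^{N−1} 1/L_{k+1}. -/
open scoped RealInnerProductSpace

/-- Lemma 2: δ-decreasing of the Bregman divergence along the iterates of the
Universal Mirror Prox method. -/
theorem universal_mirror_prox_delta_decreasing
    {E : Type*} [NormedAddCommGroup E] [InnerProductSpace ℝ E] [CompleteSpace E]
    (X : Set E) (hXne : X.Nonempty) (hXconv : Convex ℝ X)
    (d : E → ℝ) (hdconv : ConvexOn ℝ Set.univ d)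
    (Dd : E → E) (hd : ∀ x, HasGradientAt d (Dd x) x)
    (V : E → E → ℝ) (hV : ∀ y x, V y x = d y - d x - ⟪Dd x, y - x⟫)
    (g : E → E) (hmono : ∀ x ∈ X, ∀ y ∈ X, 0 ≤ ⟪g x - g y, x - y⟫)
    (xs : E) (hxs : xs ∈ X) (hMinty : ∀ x ∈ X, ⟪g x, xs - x⟫ ≤ 0)
    (δ : ℝ) (hδ : 0 ≤ δ)
    (z w : ℕ → E) (hzX : ∀ k, z k ∈ X) (hwX : ∀ k, w k ∈ X)
    (L : ℕ → ℝ) (hL : ∀ k ≥ 1, 0 < L k)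
    (hiter : ∀ k : ℕ,
      -⟪g (w k), xs - w k⟫ ≤ L (k + 1) * (V xs (z k) - V xs (z (k + 1))) + δ) :
    ∀ N : ℕ, 1 ≤ N →
      V xs (z N) ≤ V xs (z 0) + δ * ∑ k ∈ Finset.range N, 1 / L (k + 1) := by
  have key : ∀ k : ℕ, V xs (z (k + 1)) ≤ V xs (z k) + δ * (1 / L (k + 1)) := by
    intro k
    have hLk : 0 < L (k + 1) := hL _ (Nat.le_add_left 1 k)
    have h0 : (0:ℝ) ≤ -⟪g (w k), xs - w k⟫ := by
      have := hMinty (w k) (hwX k); linarith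
    have h1 := hiter k
    have h2 : 0 ≤ L (k + 1) * (V xs (z k) - V xs (z (k + 1))) + δ := le_trans h0 h1
    have h3 : -δ / L (k + 1) ≤ V xs (z k) - V xs (z (k + 1)) := by
      rw [div_le_iff₀ hLk] at *
      nlinarith
    have : δ * (1 / L (k + 1)) = δ / L (k + 1) := by ring
    rw [this]
    have : -δ / L (k + 1) = -(δ / L (k + 1)) := by ring
    linarith [h3, this ▸ h3]
  intro N _
  induction N with
  | zero => simp
  | succ n ih =>
    rcases Nat.eq_zero_or_pos n with h | h
    · subst h
      simpa using key 0
    · have := key n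
      have ihn := ih h
      rw [Finset.sum_range_succ]
      linarith
end

section
/- Let E be a real inner product space, X ⊆ E a nonempty convex set, d : E → ℝ a convex Fréchet-differentiable function with Bregman divergence V(y,x) := d(y) − d(x) − ⟨∇d(x), y − x⟩ (so V ≥ 0), and g : E → E a monotone operator on X (⟨g(x) − g(y), x − y⟩ ≥ 0 for all x, y ∈ X). Let x* ∈ X, L > 0, N ≥ 1, and let (z_k)_{k=0}^{N}, (w_k)_{k=0}^{N−1} in X and positive reals (L_k)_{k=1}^{N} with L_{k+1} ≤ 2L satisfy, for every 0 ≤ k ≤ N−1, the per-iteration inequality −⟨g(w_k), x* − w_k⟩ ≤ L_{k+1}·( V(x*, z_k) − V(x*, z_{k+1}) ). Set S_N := Σ_{k=0}^{N−1} 1/L_{k+1} and let ŵ_N := (1/S_N)·Σ_{k=0}^{N−1} (1/L_{k+1})·w_k be the weighted average of the points w_k. Then ⟨g(x*), ŵ_N − x*⟩ ≤ −(1/S_N)·Σ_{k=0}^{N−1} (1/L_{k+1})·⟨g(w_k), x* − w_k⟩ ≤ V(x*, z_0)/S_N ≤ 2L·V(x*, z_0)/N. -/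
open scoped RealInnerProductSpace
open Finset

/-!
Monotonicity gives `⟪g x*, w_k - x*⟫ ≤ ⟪g w_k, w_k - x*⟫`, and `⟪g x*, ·⟫` is affine, so the gap
at the weighted average is at most the weighted average of these terms. Divided by `L_{k+1}`,
the per-iteration inequalities telescope to `V(x*, z_0) - V(x*, z_N) ≤ V(x*, z_0)`, the Bregman
divergence being nonnegative by the gradient inequality of a convex function. Finally
`L_{k+1} ≤ 2L` gives `S_N ≥ N / (2L)`.
-/

theorem ConvexOn.inner_gradient_le_sub {E : Type*} [NormedAddCommGroup E]
    [InnerProductSpace ℝ E] [CompleteSpace E] {s : Set E} {f : E → ℝ} {f' x y : E}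
    (hf : ConvexOn ℝ s f) (hx : x ∈ s) (hy : y ∈ s) (hgrad : HasGradientAt f f' x) :
    ⟪f', y - x⟫ ≤ f y - f x := by
  set ℓ : ℝ →ᵃ[ℝ] E := AffineMap.lineMap x y
  have hline : ConvexOn ℝ (ℓ ⁻¹' s) (f ∘ ℓ) := hf.comp_affineMap ℓ
  have hderiv : HasDerivAt (f ∘ ℓ) ⟪f', y - x⟫ 0 := by
    simpa using hgrad.hasFDerivAt.comp_hasDerivAt_of_eq (0 : ℝ) AffineMap.hasDerivAt_lineMap
      (AffineMap.lineMap_apply_zero x y).symm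
  simpa [ℓ, slope_def_field] using
    hline.le_slope_of_hasDerivAt (by simpa [ℓ]) (by simpa [ℓ]) zero_lt_one hderiv

theorem sum_one_div_mul_le_sub_of_le_mul_sub {a c v : ℕ → ℝ} {N : ℕ}
    (hc : ∀ k < N, 0 < c k) (h : ∀ k < N, a k ≤ c k * (v k - v (k + 1))) :
    ∑ k ∈ range N, 1 / c k * a k ≤ v 0 - v N := by
  rw [← sum_range_sub' v N]
  refine sum_le_sum fun k hk => ?_
  have hk' := mem_range.mp hk
  rw [one_div_mul_eq_div, div_le_iff₀' (hc k hk')]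
  exact h k hk'

theorem inner_weighted_average_sub {E ι : Type*} [NormedAddCommGroup E] [InnerProductSpace ℝ E]
    (s : Finset ι) (c : ι → ℝ) (w : ι → E) (u x : E) (hc : ∑ i ∈ s, c i ≠ 0) :
    ⟪u, (1 / ∑ i ∈ s, c i) • (∑ i ∈ s, c i • w i) - x⟫ =
      (1 / ∑ i ∈ s, c i) * ∑ i ∈ s, c i * ⟪u, w i - x⟫ := by
  simp only [inner_sub_right, real_inner_smul_right, inner_sum, mul_sub, sum_sub_distrib,
    ← sum_mul]
  field_simp

theorem card_div_le_sum_one_div {ι : Type*} (s : Finset ι) {c : ι → ℝ} {B : ℝ}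
    (hc : ∀ i ∈ s, 0 < c i) (hcB : ∀ i ∈ s, c i ≤ B) :
    s.card / B ≤ ∑ i ∈ s, 1 / c i := by
  rw [div_eq_mul_one_div, ← nsmul_eq_mul, ← sum_const]
  exact sum_le_sum fun i hi => one_div_le_one_div_of_le (hc i hi) (hcB i hi)

theorem universal_mirror_prox_rate_general
    {E : Type*} [NormedAddCommGroup E] [InnerProductSpace ℝ E] [CompleteSpace E]
    (X : Set E)
    (d : E → ℝ) (hdconv : ConvexOn ℝ Set.univ d)
    (Dd : E → E) (hd : ∀ x, HasGradientAt d (Dd x) x)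
    (V : E → E → ℝ) (hV : ∀ y x, V y x = d y - d x - ⟪Dd x, y - x⟫)
    (g : E → E) (hmono : ∀ x ∈ X, ∀ y ∈ X, 0 ≤ ⟪g x - g y, x - y⟫)
    (xs : E) (hxs : xs ∈ X)
    (Lb : ℝ) (hLb : 0 < Lb) (N : ℕ) (hN : 1 ≤ N)
    (z w : ℕ → E) (hwX : ∀ k < N, w k ∈ X)
    (L : ℕ → ℝ) (hLpos : ∀ k < N, 0 < L (k + 1)) (hLle : ∀ k < N, L (k + 1) ≤ 2 * Lb)
    (hiter : ∀ k < N,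
      -⟪g (w k), xs - w k⟫ ≤ L (k + 1) * (V xs (z k) - V xs (z (k + 1))))
    (S : ℝ) (hS : S = ∑ k ∈ range N, 1 / L (k + 1))
    (wh : E) (hwh : wh = (1 / S) • ∑ k ∈ range N, (1 / L (k + 1)) • w k) :
    ⟪g xs, wh - xs⟫ ≤
        -(1 / S) * ∑ k ∈ range N, (1 / L (k + 1)) * ⟪g (w k), xs - w k⟫ ∧
      -(1 / S) * ∑ k ∈ range N, (1 / L (k + 1)) * ⟪g (w k), xs - w k⟫ ≤
        V xs (z 0) / S ∧
      V xs (z 0) / S ≤ 2 * Lb * V xs (z 0) / N := by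
  have hV_nonneg : ∀ u, 0 ≤ V xs u := fun u => by
    rw [hV]
    linarith [hdconv.inner_gradient_le_sub (Set.mem_univ u) (Set.mem_univ xs) (hd u)]
  have hS_ge : N / (2 * Lb) ≤ S := by
    simpa [hS] using card_div_le_sum_one_div (range N) (fun k hk => hLpos k (mem_range.mp hk))
      (fun k hk => hLle k (mem_range.mp hk))
  have hN_div_pos : 0 < N / (2 * Lb) := div_pos (by exact_mod_cast hN) (by positivity)
  have hS_pos : 0 < S := hN_div_pos.trans_le hS_ge
  have hneg_sum : -(1 / S) * ∑ k ∈ range N, 1 / L (k + 1) * ⟪g (w k), xs - w k⟫ =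
      1 / S * ∑ k ∈ range N, 1 / L (k + 1) * -⟪g (w k), xs - w k⟫ := by
    simp only [mul_neg, sum_neg_distrib, neg_mul]
  refine ⟨?_, ?_, ?_⟩
  · rw [hwh, hS, inner_weighted_average_sub _ _ _ _ _ (hS ▸ hS_pos.ne'), ← hS, hneg_sum]
    gcongr with k hk
    · exact (one_div_pos.mpr (hLpos k (mem_range.mp hk))).le
    · have hmono_k := hmono (w k) (hwX k (mem_range.mp hk)) xs hxs
      rw [inner_sub_left] at hmono_k
      rw [← neg_sub (w k) xs, inner_neg_right, neg_neg]
      linarith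
  · rw [hneg_sum, one_div_mul_eq_div]
    gcongr
    linarith [sum_one_div_mul_le_sub_of_le_mul_sub hLpos hiter, hV_nonneg (z N)]
  · calc V xs (z 0) / S ≤ V xs (z 0) / (N / (2 * Lb)) :=
          div_le_div_of_nonneg_left (hV_nonneg _) hN_div_pos hS_ge
      _ = 2 * Lb * V xs (z 0) / N := by field_simp

/-- Theorem 1: convergence rate of the Universal Mirror Prox (exact line search,
adaptive constants bounded by 2L), with output the weighted average of the w_k. -/
theorem universal_mirror_prox_rate
    {E : Type*} [NormedAddCommGroup E] [InnerProductSpace ℝ E] [CompleteSpace E]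
    (X : Set E) (hXne : X.Nonempty) (hXconv : Convex ℝ X)
    (d : E → ℝ) (hdconv : ConvexOn ℝ Set.univ d)
    (Dd : E → E) (hd : ∀ x, HasGradientAt d (Dd x) x)
    (V : E → E → ℝ) (hV : ∀ y x, V y x = d y - d x - ⟪Dd x, y - x⟫)
    (g : E → E) (hmono : ∀ x ∈ X, ∀ y ∈ X, 0 ≤ ⟪g x - g y, x - y⟫)
    (xs : E) (hxs : xs ∈ X)
    (Lb : ℝ) (hLb : 0 < Lb) (N : ℕ) (hN : 1 ≤ N)
    (z w : ℕ → E) (hzX : ∀ k ≤ N, z k ∈ X) (hwX : ∀ k < N, w k ∈ X)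
    (L : ℕ → ℝ) (hLpos : ∀ k < N, 0 < L (k + 1)) (hLle : ∀ k < N, L (k + 1) ≤ 2 * Lb)
    (hiter : ∀ k < N,
      -⟪g (w k), xs - w k⟫ ≤ L (k + 1) * (V xs (z k) - V xs (z (k + 1))))
    (S : ℝ) (hS : S = ∑ k ∈ range N, 1 / L (k + 1))
    (wh : E) (hwh : wh = (1 / S) • ∑ k ∈ range N, (1 / L (k + 1)) • w k) :
    ⟪g xs, wh - xs⟫ ≤
        -(1 / S) * ∑ k ∈ range N, (1 / L (k + 1)) * ⟪g (w k), xs - w k⟫ ∧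
      -(1 / S) * ∑ k ∈ range N, (1 / L (k + 1)) * ⟪g (w k), xs - w k⟫ ≤
        V xs (z 0) / S ∧
      V xs (z 0) / S ≤ 2 * Lb * V xs (z 0) / N :=
  universal_mirror_prox_rate_general X d hdconv Dd hd V hV g hmono xs hxs Lb hLb N hN z w hwX L
    hLpos hLle hiter S hS wh hwh
end
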